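/- arXiv:0712.3836 — 2 statements merged into one kernel-verified Lean document; each statement's English description precedes it below -/
import Mathlib

section
/- In the braid group B_n (n ≥ 3), define φ_n(β) = δ_n β δ_n^{−1} with δ_n = σ_1 ⋯ σ_{n−1}, and for r ≥ 1 set λ_{n,r} = φ_n^{r+1}(a_{n−2,n−1}) · φ_n^r(a_{n−2,n−1}) ⋯ φ_n^2(a_{n−2,n−1}). Then λ_{n,r} = δ_n^r δ_{n−1}^{−r}, where δ_{n−1} = σ_1 ⋯ σ_{n−2}. -/
/-- Relations of the braid group `B_n` on generators `σ_1, …, σ_{n-1}`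
(indexed by natural numbers; the generators of index `0` or `≥ n` are killed,
so that the presented group is exactly `B_n`). -/
def braidRels (n : ℕ) : Set (FreeGroup ℕ) :=
  {r | (∃ i j : ℕ, 1 ≤ i ∧ i + 2 ≤ j ∧ j ≤ n - 1 ∧
          r = FreeGroup.of i * FreeGroup.of j * (FreeGroup.of i)⁻¹ * (FreeGroup.of j)⁻¹) ∨
       (∃ i : ℕ, 1 ≤ i ∧ i + 1 ≤ n - 1 ∧
          r = FreeGroup.of i * FreeGroup.of (i + 1) * FreeGroup.of i *
              (FreeGroup.of (i + 1) * FreeGroup.of i * FreeGroup.of (i + 1))⁻¹) ∨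
       (∃ i : ℕ, (i = 0 ∨ n ≤ i) ∧ r = FreeGroup.of i)}

/-- The braid group `B_n`. -/
def BraidGroup (n : ℕ) : Type := PresentedGroup (braidRels n)

instance (n : ℕ) : Group (BraidGroup n) := by unfold BraidGroup; infer_instance

/-- The Artin generator `σ_i` of `B_n` (nontrivial for `1 ≤ i ≤ n-1`). -/
def σ (n i : ℕ) : BraidGroup n := PresentedGroup.of i

/-- `δ_{p,q} = σ_p σ_{p+1} ⋯ σ_{q-1}` (equal to `1` when `q ≤ p`). -/
def δδ (n p q : ℕ) : BraidGroup n :=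
  ((List.range (q - p)).map (fun k => σ n (p + k))).prod

/-- The Birman–Ko–Lee generator
`a_{p,q} = σ_p ⋯ σ_{q-2} σ_{q-1} σ_{q-2}⁻¹ ⋯ σ_p⁻¹ = δ_{p,q-1} σ_{q-1} δ_{p,q-1}⁻¹`. -/
def a (n p q : ℕ) : BraidGroup n :=
  δδ n p (q - 1) * σ n (q - 1) * (δδ n p (q - 1))⁻¹

/-- A braid of `B_n` is `σ_i`-positive if it is represented by a word in the
letters `σ_j^{±1}` containing at least one `σ_i`, no `σ_i⁻¹`,
and no letter `σ_j^{±1}` with `j > i`. -/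
def SigmaPositive (n i : ℕ) (β : BraidGroup n) : Prop :=
  ∃ w : List (ℕ × Bool),
    ((w.map (fun l => if l.2 then σ n l.1 else (σ n l.1)⁻¹)).prod = β) ∧
    (i, true) ∈ w ∧ (i, false) ∉ w ∧ ∀ l ∈ w, l.1 ≤ i

/-! Since `δ_n = δ_{n-1} σ_{n-1}` and `δ_n σ_{n-2} δ_n⁻¹ = σ_{n-1}`, we get
`φ_n(a_{n-2,n-1}) = δ_{n-1}⁻¹ δ_n`, hence
`φ_n^{k+1}(a_{n-2,n-1}) = δ_n^k δ_{n-1}⁻¹ δ_n^{1-k}`, and the product `λ_{n,r}` telescopes to `δ_n^r δ_{n-1}^{-r}`. -/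

lemma prod_conj_pow_eq_pow_mul_inv_pow {G : Type*} [Group G] {d e x : G}
    (h : d * x * d⁻¹ = e⁻¹ * d) (r : ℕ) :
    ((List.range r).map fun j => d ^ (r + 1 - j) * x * (d ^ (r + 1 - j))⁻¹).prod =
      d ^ r * (e ^ r)⁻¹ := by
  induction r with
  | zero => simp
  | succ r ih =>
    rw [List.range_succ_eq_map, List.map_cons, List.prod_cons, List.map_map]
    simp only [Function.comp_def, Nat.succ_eq_add_one, Nat.add_sub_add_right, Nat.sub_zero,
      ih]
    calc d ^ (r + 1 + 1) * x * (d ^ (r + 1 + 1))⁻¹ * (d ^ r * (e ^ r)⁻¹)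
        = d ^ (r + 1) * (d * x * d⁻¹) * (d ^ (r + 1))⁻¹ * (d ^ r * (e ^ r)⁻¹) := by group
      _ = d ^ (r + 1) * (e ^ (r + 1))⁻¹ := by rw [h]; group

section Relations

variable {n : ℕ}

lemma σ_commute {i j : ℕ} (hi : 1 ≤ i) (hij : i + 2 ≤ j) (hj : j ≤ n - 1) :
    Commute (σ n i) (σ n j) := by
  have h := PresentedGroup.mk_eq_mk_of_mul_inv_mem (rels := braidRels n)
    (x := FreeGroup.of i * FreeGroup.of j) (y := FreeGroup.of j * FreeGroup.of i)
    (Or.inl ⟨i, j, hi, hij, hj, by group⟩)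
  simp only [map_mul] at h
  exact h

lemma σ_braid {i : ℕ} (hi : 1 ≤ i) (hin : i + 1 ≤ n - 1) :
    σ n i * σ n (i + 1) * σ n i = σ n (i + 1) * σ n i * σ n (i + 1) := by
  have h := PresentedGroup.mk_eq_mk_of_mul_inv_mem (rels := braidRels n)
    (Or.inr (Or.inl ⟨i, hi, hin, rfl⟩))
  simp only [map_mul] at h
  exact h

lemma δδ_trans {p q s : ℕ} (hpq : p ≤ q) (hqs : q ≤ s) :
    δδ n p s = δδ n p q * δδ n q s := by
  unfold δδ
  rw [show s - p = (q - p) + (s - q) by omega, List.range_add, List.map_append,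
    List.prod_append, List.map_map]
  congr 2
  refine List.map_congr_left fun k _ => ?_
  simp only [Function.comp_apply]
  congr 1
  omega

lemma δδ_self_succ (p : ℕ) : δδ n p (p + 1) = σ n p := by
  simp [δδ]

lemma a_self_succ (p : ℕ) : a n p (p + 1) = σ n p := by
  simp [a, δδ]

lemma δδ_mul_σ {p q i : ℕ} (hp : 1 ≤ p) (hpi : p ≤ i) (hiq : i + 2 ≤ q) (hq : q ≤ n) :
    δδ n p q * σ n i = σ n (i + 1) * δδ n p q := by
  have hleft : Commute (σ n (i + 1)) (δδ n p i) :=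
    Commute.list_prod_right _ _ fun x hx => by
      obtain ⟨k, hk, rfl⟩ := List.mem_map.1 hx
      rw [List.mem_range] at hk
      exact (σ_commute (by omega) (by omega) (by omega)).symm
  have hright : Commute (σ n i) (δδ n (i + 2) q) :=
    Commute.list_prod_right _ _ fun x hx => by
      obtain ⟨k, hk, rfl⟩ := List.mem_map.1 hx
      rw [List.mem_range] at hk
      exact σ_commute (by omega) (by omega) (by omega)
  have hsplit : δδ n p q = δδ n p i * (σ n i * σ n (i + 1)) * δδ n (i + 2) q := by
    rw [δδ_trans (q := i + 2) (by omega) hiq, δδ_trans hpi (by omega : i ≤ i + 2),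
      δδ_trans (p := i) (q := i + 1) (s := i + 2) (by omega) (by omega), δδ_self_succ,
      δδ_self_succ]
  rw [hsplit]
  calc δδ n p i * (σ n i * σ n (i + 1)) * δδ n (i + 2) q * σ n i
      = δδ n p i * (σ n i * σ n (i + 1) * σ n i) * δδ n (i + 2) q := by
        rw [mul_assoc _ (δδ n (i + 2) q), ← hright.eq]; simp only [mul_assoc]
    _ = δδ n p i * (σ n (i + 1) * σ n i * σ n (i + 1)) * δδ n (i + 2) q := by
        rw [σ_braid (hp.trans hpi) (by omega)]
    _ = σ n (i + 1) * (δδ n p i * (σ n i * σ n (i + 1)) * δδ n (i + 2) q) := by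
        simp only [← mul_assoc]; rw [← hleft.eq]

end Relations

theorem stmt13_general (n r : ℕ) (hn : 3 ≤ n) :
    ((List.range r).map (fun j =>
        (δδ n 1 n) ^ (r + 1 - j) * a n (n - 2) (n - 1) * ((δδ n 1 n) ^ (r + 1 - j))⁻¹)).prod =
      (δδ n 1 n) ^ r * ((δδ n 1 (n - 1)) ^ r)⁻¹ := by
  have hn' : n - 1 = n - 2 + 1 := by omega
  have ha : a n (n - 2) (n - 1) = σ n (n - 2) := by rw [hn', a_self_succ]
  have hφ : δδ n 1 n * σ n (n - 2) = σ n (n - 1) * δδ n 1 n := by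
    rw [δδ_mul_σ le_rfl (by omega) (by omega) le_rfl, ← hn']
  have hδ : δδ n 1 n = δδ n 1 (n - 1) * σ n (n - 1) := by
    rw [δδ_trans (q := n - 1) (by omega) (by omega)]
    congr 1
    simpa only [Nat.sub_add_cancel (by omega : 1 ≤ n)] using δδ_self_succ (n := n) (n - 1)
  refine prod_conj_pow_eq_pow_mul_inv_pow ?_ r
  rw [ha, hφ, mul_inv_cancel_right, hδ, inv_mul_cancel_left]

theorem stmt13 (n r : ℕ) (hn : 3 ≤ n) (hr : 1 ≤ r) :
    ((List.range r).map (fun j =>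
        (δδ n 1 n) ^ (r + 1 - j) * a n (n - 2) (n - 1) * ((δδ n 1 n) ^ (r + 1 - j))⁻¹)).prod =
      (δδ n 1 n) ^ r * ((δδ n 1 (n - 1)) ^ r)⁻¹ :=
  stmt13_general n r hn
end

section
/- In the braid group B_n (n ≥ 3), for 0 ≤ r < s, the quotient λ_{n,r}^{−1} λ_{n,s} = δ_{n−1}^r δ_n^{s−r} δ_{n−1}^{−s} (for r ≥ 1), where λ_{n,t} = δ_n^t δ_{n−1}^{−t}; in particular this quotient can be written as a product of a positive word in σ_1,…,σ_{n−2} and their inverses together with at least one occurrence of σ_{n−1} and no occurrence of σ_{n−1}^{−1}. -/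
def wordEval (n : ℕ) (w : List (ℕ × Bool)) : BraidGroup n :=
  (w.map fun l => if l.2 then σ n l.1 else (σ n l.1)⁻¹).prod

def SigmaNonneg (n i : ℕ) (β : BraidGroup n) : Prop :=
  ∃ w : List (ℕ × Bool), wordEval n w = β ∧ (i, false) ∉ w ∧ ∀ l ∈ w, l.1 ≤ i

theorem wordEval_append (n : ℕ) (v w : List (ℕ × Bool)) :
    wordEval n (v ++ w) = wordEval n v * wordEval n w := by
  simp only [wordEval, List.map_append, List.prod_append]

theorem δδ_succ (n : ℕ) {p q : ℕ} (hpq : p ≤ q) : δδ n p (q + 1) = δδ n p q * σ n q := by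
  rw [δδ, δδ, Nat.sub_add_comm hpq, List.range_succ, List.map_append, List.prod_append]
  simp [Nat.add_sub_cancel' hpq]

namespace SigmaNonneg

variable {n i : ℕ} {β γ : BraidGroup n}

theorem one : SigmaNonneg n i 1 :=
  ⟨[], rfl, List.not_mem_nil, fun _ h => absurd h List.not_mem_nil⟩

theorem mul (hβ : SigmaNonneg n i β) (hγ : SigmaNonneg n i γ) : SigmaNonneg n i (β * γ) := by
  obtain ⟨v, rfl, hv, hvi⟩ := hβ
  obtain ⟨w, rfl, hw, hwi⟩ := hγ
  refine ⟨v ++ w, wordEval_append n v w, ?_, ?_⟩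
  · simp only [List.mem_append, not_or]
    exact ⟨hv, hw⟩
  · simp only [List.mem_append]
    rintro l (hl | hl)
    exacts [hvi l hl, hwi l hl]

theorem pow (hβ : SigmaNonneg n i β) (k : ℕ) : SigmaNonneg n i (β ^ k) := by
  induction k with
  | zero => simpa using one
  | succ k ih => simpa only [pow_succ] using ih.mul hβ

theorem list_prod {l : List (BraidGroup n)} (hl : ∀ β ∈ l, SigmaNonneg n i β) :
    SigmaNonneg n i l.prod := by
  induction l with
  | nil => exact one
  | cons β l ih =>
    rw [List.prod_cons]
    exact (hl β List.mem_cons_self).mul (ih fun γ hγ => hl γ (List.mem_cons_of_mem β hγ))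

theorem σ_of_le {j : ℕ} (hj : j ≤ i) : SigmaNonneg n i (σ n j) :=
  ⟨[(j, true)], by simp [wordEval], by simp, by simpa using hj⟩

theorem σ_inv_of_lt {j : ℕ} (hj : j < i) : SigmaNonneg n i (σ n j)⁻¹ :=
  ⟨[(j, false)], by simp [wordEval], by simpa using hj.ne', by simpa using hj.le⟩

theorem δδ_of_le {p q : ℕ} (hq : q ≤ i + 1) : SigmaNonneg n i (δδ n p q) := by
  refine list_prod ?_
  simp only [List.mem_map, List.mem_range, forall_exists_index, and_imp]
  rintro _ k hk rfl
  exact σ_of_le (by omega)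

theorem δδ_inv_of_le {p q : ℕ} (hq : q ≤ i) : SigmaNonneg n i (δδ n p q)⁻¹ := by
  rw [δδ, List.prod_inv_reverse]
  refine list_prod ?_
  simp only [List.mem_reverse, List.map_map, List.mem_map, List.mem_range, Function.comp_apply,
    forall_exists_index, and_imp]
  rintro _ k hk rfl
  exact σ_inv_of_lt (by omega)

end SigmaNonneg

theorem SigmaPositive.of_sigmaNonneg_mul_σ_mul {n i : ℕ} {β γ : BraidGroup n}
    (hβ : SigmaNonneg n i β) (hγ : SigmaNonneg n i γ) : SigmaPositive n i (β * σ n i * γ) := by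
  obtain ⟨v, rfl, hv, hvi⟩ := hβ
  obtain ⟨w, rfl, hw, hwi⟩ := hγ
  refine ⟨v ++ (i, true) :: w, ?_, by simp, ?_, ?_⟩
  · simp [wordEval, mul_assoc]
  · simp [hv, hw]
  · simp only [List.mem_append, List.mem_cons]
    rintro l (hl | rfl | hl)
    exacts [hvi l hl, le_rfl, hwi l hl]

theorem stmt14 (n r s : ℕ) (hn : 3 ≤ n) (hrs : r < s) :
    (1 ≤ r →
      ((δδ n 1 n) ^ r * ((δδ n 1 (n - 1)) ^ r)⁻¹)⁻¹ *
        ((δδ n 1 n) ^ s * ((δδ n 1 (n - 1)) ^ s)⁻¹) =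
      (δδ n 1 (n - 1)) ^ r * (δδ n 1 n) ^ (s - r) * ((δδ n 1 (n - 1)) ^ s)⁻¹) ∧
    SigmaPositive n (n - 1)
      (((δδ n 1 n) ^ r * ((δδ n 1 (n - 1)) ^ r)⁻¹)⁻¹ *
        ((δδ n 1 n) ^ s * ((δδ n 1 (n - 1)) ^ s)⁻¹)) := by
  set δ := δδ n 1 n
  set δ' := δδ n 1 (n - 1)
  have quotient_eq : (δ ^ r * (δ' ^ r)⁻¹)⁻¹ * (δ ^ s * (δ' ^ s)⁻¹) =
      δ' ^ r * δ ^ (s - r) * (δ' ^ s)⁻¹ := by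
    obtain ⟨k, rfl⟩ := Nat.exists_eq_add_of_le hrs.le
    rw [Nat.add_sub_cancel_left, pow_add]
    group
  refine ⟨fun _ => quotient_eq, ?_⟩
  have δ_eq : δ = δ' * σ n (n - 1) := by
    rw [← δδ_succ n (by omega : 1 ≤ n - 1), Nat.sub_add_cancel (by omega)]
  have regroup : δ' ^ r * δ ^ (s - r) * (δ' ^ s)⁻¹ =
      δ' ^ r * δ ^ (s - r - 1) * δ' * σ n (n - 1) * (δ'⁻¹) ^ s := by
    rw [← pow_sub_one_mul (by omega : s - r ≠ 0), δ_eq, inv_pow]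
    group
  rw [quotient_eq, regroup]
  refine SigmaPositive.of_sigmaNonneg_mul_σ_mul ?_ ((SigmaNonneg.δδ_inv_of_le le_rfl).pow s)
  have hδ' : SigmaNonneg n (n - 1) δ' := SigmaNonneg.δδ_of_le (by omega)
  exact ((hδ'.pow r).mul ((SigmaNonneg.δδ_of_le (by omega)).pow _)).mul hδ'
end
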